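/- For any real t with |t| ≤ 1/4, (1-2t)^(-1/2) * e^(-t) ≤ e^(2t²). -/

import Mathlib

/-!
Taking logarithms, the claim is `log (1 - u) ≥ -u - u²` for `u = 2t`. For `u ≤ 0` this follows
from `exp x ≥ 1 + x` since `(1 - u)(1 + u + u²) = 1 - u³ ≥ 1`; for `0 ≤ u ≤ 1/2` one needs the
second-order bound `exp x ≥ 1 + x + x²/2`, which gives `(1 - u) exp (u + u²) - 1 ≥
u²(1 - u - u² - u³)/2 ≥ 0`.
-/

open Real

lemma one_le_one_sub_mul_exp_add_sq_of_nonpos {u : ℝ} (hu : u ≤ 0) :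
    1 ≤ (1 - u) * exp (u + u ^ 2) :=
  calc 1 ≤ (1 - u) * (u + u ^ 2 + 1) := by nlinarith [pow_two_nonneg u]
    _ ≤ (1 - u) * exp (u + u ^ 2) := mul_le_mul_of_nonneg_left (add_one_le_exp _) (by linarith)

lemma one_le_one_sub_mul_exp_add_sq_of_nonneg {u : ℝ} (hu₀ : 0 ≤ u) (hu : u ≤ 1 / 2) :
    1 ≤ (1 - u) * exp (u + u ^ 2) := by
  calc 1 ≤ (1 - u) * (1 + (u + u ^ 2) + (u + u ^ 2) ^ 2 / 2) := by
        nlinarith [mul_nonneg (pow_two_nonneg u) (by nlinarith : 0 ≤ 1 - u - u ^ 2 - u ^ 3)]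
    _ ≤ (1 - u) * exp (u + u ^ 2) :=
        mul_le_mul_of_nonneg_left (quadratic_le_exp_of_nonneg (by positivity)) (by linarith)

lemma neg_sub_sq_le_log_one_sub {u : ℝ} (hu : u ≤ 1 / 2) : -u - u ^ 2 ≤ log (1 - u) := by
  have hpos : 0 < 1 - u := by linarith
  have hbound : 1 ≤ (1 - u) * exp (u + u ^ 2) := by
    rcases le_total u 0 with hu₀ | hu₀
    · exact one_le_one_sub_mul_exp_add_sq_of_nonpos hu₀
    · exact one_le_one_sub_mul_exp_add_sq_of_nonneg hu₀ hu
  rw [le_log_iff_exp_le hpos, show -u - u ^ 2 = -(u + u ^ 2) by ring, exp_neg,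
    inv_le_iff_one_le_mul₀ (exp_pos _)]
  linarith

theorem stmt0 (t : ℝ) (ht : |t| ≤ 1/4) :
    (1 - 2*t) ^ (-(1:ℝ)/2) * Real.exp (-t) ≤ Real.exp (2 * t^2) := by
  have ht' : t ≤ 1 / 4 := (abs_le.mp ht).2
  have hlog := neg_sub_sq_le_log_one_sub (u := 2 * t) (by linarith)
  rw [rpow_def_of_pos (by linarith), ← exp_add, exp_le_exp]
  linarith
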